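/- arXiv:1712.00694 — 9 statements merged into one kernel-verified Lean document; each statement's English description precedes it below -/
import Mathlib

section
/- Let H be a numerical semigroup (an additive submonoid of ℕ containing 0 with finite complement) whose minimal generating set is {3, p, q} with 3 < p < q. Then p + q is divisible by 3, the integers r := (2p − q)/3 and s := (2q − p)/3 are positive and satisfy r < s, p = 2r + s and q = r + 2s, and the genus of H (the cardinality of ℕ \ H) equals r + s − 1. -/
/-!
Minimality forces `p` and `q` to be nonzero and distinct modulo `3` (so `p % 3 + q % 3 = 3`,
whence `3 ∣ p + q`), and `q < 2p`, since otherwise `q ≡ 2p` would put `q` in `⟨3, p⟩`.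
Then `{0, p, q}` is the Apéry set of `3`: an integer lies in `H` iff it is at least the element
of `{0, p, q}` in its residue class. The gaps are therefore the `n < p` with `n ≡ p` and the
`n < q` with `n ≡ q`, and there are `p / 3 + q / 3 = (p + q) / 3 - 1 = r + s - 1` of them.
-/

open Finset

namespace AddSubmonoid

lemma notMem_closure_pair_of_minimal {M : Type*} [AddMonoid M] {x y z : M}
    (hz : z ∉ ({x, y} : Set M))
    (hmin : ∀ T ⊂ ({x, y, z} : Set M), closure T ≠ closure {x, y, z}) :
    z ∉ closure {x, y} := by
  intro hz'
  have hssubset : ({x, y} : Set M) ⊂ {x, y, z} := by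
    rw [Set.pair_comm y z, Set.insert_comm x z]
    exact Set.ssubset_insert hz
  refine hmin _ hssubset (le_antisymm (closure_mono hssubset.subset) (closure_le.2 ?_))
  rintro w (rfl | rfl | rfl)
  exacts [subset_closure (by simp), subset_closure (by simp), hz']

variable {S : AddSubmonoid ℕ} {d m n : ℕ}

lemma mem_of_le_of_modEq (hd : d ∈ S) (hm : m ∈ S) (hmn : m ≤ n) (h : n ≡ m [MOD d]) :
    n ∈ S := by
  obtain ⟨c, hc⟩ := (Nat.modEq_iff_dvd' hmn).1 h.symm
  rw [← Nat.add_sub_of_le hmn, hc, mul_comm, ← smul_eq_mul]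
  exact add_mem hm (nsmul_mem hd c)

lemma lt_of_notMem_of_modEq (hd : d ∈ S) (hm : m ∈ S) (hn : n ∉ S) (h : n ≡ m [MOD d]) :
    n < m :=
  lt_of_not_ge fun hmn => hn (mem_of_le_of_modEq hd hm hmn h)

end AddSubmonoid

open AddSubmonoid

lemma Nat.card_filter_range_modEq_self (m : ℕ) {d : ℕ} (hd : 0 < d) :
    #{n ∈ range m | n ≡ m [MOD d]} = m / d := by
  simpa [Nat.count_eq_card_filter_range] using Nat.count_modEq_card (b := m) hd m

section

variable {p q : ℕ}

lemma mod_three_add_mod_three_eq (hp : p ∉ AddSubmonoid.closure {3, q})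
    (hq : q ∉ AddSubmonoid.closure {3, p}) (hpq : p < q) : p % 3 + q % 3 = 3 := by
  have three_mem {a : ℕ} : 3 ∈ AddSubmonoid.closure {3, a} := subset_closure (by simp)
  have hp0 := mt (lt_of_notMem_of_modEq three_mem (zero_mem _) hp) (Nat.not_lt_zero p)
  have hq0 := mt (lt_of_notMem_of_modEq three_mem (zero_mem _) hq) (Nat.not_lt_zero q)
  have hqp := mt (lt_of_notMem_of_modEq three_mem (subset_closure (by simp)) hq) hpq.not_gt
  unfold Nat.ModEq at hp0 hq0 hqp
  omega

lemma lt_two_mul_of_notMem_closure (hq : q ∉ AddSubmonoid.closure {3, p})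
    (hres : p % 3 + q % 3 = 3) : q < 2 * p := by
  have hp : p ∈ AddSubmonoid.closure {3, p} := subset_closure (by simp)
  have h2p : 2 * p ∈ AddSubmonoid.closure {3, p} := by simpa [two_mul] using add_mem hp hp
  exact lt_of_notMem_of_modEq (d := 3) (subset_closure (by simp)) h2p hq
    (by unfold Nat.ModEq; omega)

variable (hres : p % 3 + q % 3 = 3) (hpq : p < q) (hqp : q < 2 * p)
include hres hpq hqp

lemma mem_closure_three_iff {n : ℕ} : n ∈ AddSubmonoid.closure {3, p, q} ↔
    n % 3 = 0 ∨ (n % 3 = p % 3 ∧ p ≤ n) ∨ (n % 3 = q % 3 ∧ q ≤ n) := by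
  constructor
  · intro hn
    induction hn using AddSubmonoid.closure_induction with
    | mem x hx => rcases hx with rfl | rfl | rfl <;> omega
    | zero => omega
    | add x y _ _ hx hy => omega
  · have generator_mem {x : ℕ} (hx : x ∈ ({3, p, q} : Set ℕ)) :=
      AddSubmonoid.subset_closure hx
    have three_mem : 3 ∈ AddSubmonoid.closure {3, p, q} := generator_mem (by simp)
    rintro (h | ⟨h, hle⟩ | ⟨h, hle⟩)
    · exact mem_of_le_of_modEq three_mem (zero_mem _) n.zero_le h
    · exact mem_of_le_of_modEq three_mem (generator_mem (by simp)) hle h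
    · exact mem_of_le_of_modEq three_mem (generator_mem (by simp)) hle h

lemma ncard_setOf_notMem_closure_three :
    {n | n ∉ AddSubmonoid.closure {3, p, q}}.ncard = p / 3 + q / 3 := by
  have hgaps : {n | n ∉ AddSubmonoid.closure {3, p, q}} =
      ↑({n ∈ range p | n ≡ p [MOD 3]} ∪ {n ∈ range q | n ≡ q [MOD 3]}) := by
    ext n
    simp only [Set.mem_ofPred_eq, mem_closure_three_iff hres hpq hqp, coe_union, Set.mem_union,
      mem_coe, mem_filter, mem_range]
    unfold Nat.ModEq
    omega
  have hdisj : Disjoint {n ∈ range p | n ≡ p [MOD 3]} {n ∈ range q | n ≡ q [MOD 3]} := by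
    simp only [disjoint_left, mem_filter, mem_range]
    unfold Nat.ModEq
    omega
  rw [hgaps, Set.ncard_coe_finset, card_union_of_disjoint hdisj,
    Nat.card_filter_range_modEq_self p three_pos, Nat.card_filter_range_modEq_self q three_pos]

end

theorem stmt0_general (H : AddSubmonoid ℕ) (p q : ℕ) (h3p : 3 < p) (hpq : p < q)
    (hgen : AddSubmonoid.closure ({3, p, q} : Set ℕ) = H)
    (hmin : ∀ S : Set ℕ, S ⊂ ({3, p, q} : Set ℕ) → AddSubmonoid.closure S ≠ H) :
    3 ∣ (p + q) ∧
    ∃ r s : ℕ, 0 < r ∧ r < s ∧ 3 * r = 2 * p - q ∧ 3 * s = 2 * q - p ∧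
      p = 2 * r + s ∧ q = r + 2 * s ∧ {n : ℕ | n ∉ H}.ncard = r + s - 1 := by
  subst hgen
  have hq := notMem_closure_pair_of_minimal (by simp; omega) hmin
  rw [Set.pair_comm p q] at hmin
  have hp := notMem_closure_pair_of_minimal (by simp; omega) hmin
  have hres := mod_three_add_mod_three_eq hp hq hpq
  have hqp := lt_two_mul_of_notMem_closure hq hres
  have hgenus := ncard_setOf_notMem_closure_three hres hpq hqp
  refine ⟨by omega, (2 * p - q) / 3, (2 * q - p) / 3, ?_⟩
  omega

/-- If `H` is a numerical semigroup (additive submonoid of ℕ with finite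
complement) whose minimal generating set is `{3, p, q}` with `3 < p < q`, then `3 ∣ p + q`,
the integers `r = (2p − q)/3` and `s = (2q − p)/3` are positive, satisfy `r < s`,
`p = 2r + s`, `q = r + 2s`, and the genus of `H` equals `r + s − 1`. -/
theorem stmt0 (H : AddSubmonoid ℕ) (hfin : {n : ℕ | n ∉ H}.Finite)
    (p q : ℕ) (h3p : 3 < p) (hpq : p < q)
    (hgen : AddSubmonoid.closure ({3, p, q} : Set ℕ) = H)
    (hmin : ∀ S : Set ℕ, S ⊂ ({3, p, q} : Set ℕ) → AddSubmonoid.closure S ≠ H) :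
    3 ∣ (p + q) ∧
    ∃ r s : ℕ, 0 < r ∧ r < s ∧ 3 * r = 2 * p - q ∧ 3 * s = 2 * q - p ∧
      p = 2 * r + s ∧ q = r + 2 * s ∧ {n : ℕ | n ∉ H}.ncard = r + s - 1 :=
  stmt0_general H p q h3p hpq hgen hmin
end

section
/- For integers r, s with 1 ≤ r < s and s − r not divisible by 3, the complement in ℕ of the additive submonoid ⟨3, 2r+s, r+2s⟩ generated by 3, 2r+s and r+2s is finite and has cardinality exactly r + s − 1. -/
/-- For integers `r, s` with `1 ≤ r < s` and `3 ∤ (s − r)`, the complement in ℕ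
of the additive submonoid generated by `3`, `2r+s` and `r+2s` is finite and has cardinality
exactly `r + s − 1`. -/
theorem stmt1 (r s : ℕ) (hr : 1 ≤ r) (hrs : r < s) (h3 : ¬ (3 ∣ (s - r))) :
    {n : ℕ | n ∉ AddSubmonoid.closure ({3, 2*r+s, r+2*s} : Set ℕ)}.Finite ∧
    {n : ℕ | n ∉ AddSubmonoid.closure ({3, 2*r+s, r+2*s} : Set ℕ)}.ncard = r + s - 1 := by
  set a := 2*r+s with ha
  set b := r+2*s with hb
  have e1 : a % 3 = (s-r) % 3 := by omega
  have e2 : b % 3 = (2*(s-r)) % 3 := by omega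
  have e3 : (s-r) % 3 + (2*(s-r)) % 3 = 3 := by omega
  -- membership characterization via explicit sums
  have hmem : ∀ n : ℕ, n ∈ AddSubmonoid.closure ({3, a, b} : Set ℕ) ↔
      ∃ x y z : ℕ, n = 3*x + y*a + z*b := by
    intro n
    constructor
    · intro hn
      induction hn using AddSubmonoid.closure_induction with
      | mem m hm =>
        simp only [Set.mem_insert_iff, Set.mem_singleton_iff] at hm
        rcases hm with h | h | h
        · exact ⟨1, 0, 0, by omega⟩
        · exact ⟨0, 1, 0, by omega⟩
        · exact ⟨0, 0, 1, by omega⟩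
      | zero => exact ⟨0, 0, 0, by omega⟩
      | add p q _ _ hp hq =>
        obtain ⟨x1, y1, z1, rfl⟩ := hp
        obtain ⟨x2, y2, z2, rfl⟩ := hq
        exact ⟨x1+x2, y1+y2, z1+z2, by ring⟩
    · rintro ⟨x, y, z, rfl⟩
      have h3m : (3:ℕ) ∈ AddSubmonoid.closure ({3, a, b} : Set ℕ) :=
        AddSubmonoid.subset_closure (by simp)
      have ham : a ∈ AddSubmonoid.closure ({3, a, b} : Set ℕ) :=
        AddSubmonoid.subset_closure (by simp)
      have hbm : b ∈ AddSubmonoid.closure ({3, a, b} : Set ℕ) :=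
        AddSubmonoid.subset_closure (by simp)
      have := add_mem (add_mem (nsmul_mem h3m x) (nsmul_mem ham y))
        (nsmul_mem hbm z)
      simpa [smul_eq_mul, mul_comm] using this
  -- arithmetic characterization
  have hchar : ∀ n : ℕ, (∃ x y z : ℕ, n = 3*x + y*a + z*b) ↔
      (n % 3 = 0 ∨ (n % 3 = a % 3 ∧ a ≤ n) ∨ (n % 3 = b % 3 ∧ b ≤ n)) := by
    intro n
    constructor
    · rintro ⟨x, y, z, rfl⟩
      have e : ∃ m, 3*x + y*a + z*b = 3*m + (y%3)*a + (z%3)*b := by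
        refine ⟨x + (y/3)*a + (z/3)*b, ?_⟩
        calc 3*x + y*a + z*b = 3*x + (3*(y/3)+y%3)*a + (3*(z/3)+z%3)*b := by
              rw [Nat.div_add_mod, Nat.div_add_mod]
          _ = _ := by ring
      obtain ⟨m, hm⟩ := e
      have hy3 : y % 3 = 0 ∨ y % 3 = 1 ∨ y % 3 = 2 := by omega
      have hz3 : z % 3 = 0 ∨ z % 3 = 1 ∨ z % 3 = 2 := by omega
      rcases hy3 with h1 | h1 | h1 <;> rcases hz3 with h2 | h2 | h2 <;>
        rw [h1, h2] at hm <;> rw [hm] <;> omega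
    · rintro (h | ⟨h1, h2⟩ | ⟨h1, h2⟩)
      · exact ⟨n/3, 0, 0, by omega⟩
      · exact ⟨(n-a)/3, 1, 0, by omega⟩
      · exact ⟨(n-b)/3, 0, 1, by omega⟩
  -- the gap set as a Finset
  have hset : {n : ℕ | n ∉ AddSubmonoid.closure ({3, a, b} : Set ℕ)} =
      ↑((Finset.range a).filter (· % 3 = a % 3) ∪ (Finset.range b).filter (· % 3 = b % 3)) := by
    ext n
    simp only [Set.mem_setOf_eq, hmem, hchar, Finset.coe_union, Set.mem_union,
      Finset.coe_filter, Finset.mem_range, Set.mem_setOf_eq]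
    omega
  have himg : ∀ m : ℕ, (Finset.range m).filter (· % 3 = m % 3) =
      (Finset.range (m/3)).image (fun k => 3*k + m % 3) := by
    intro m
    ext n
    simp only [Finset.mem_filter, Finset.mem_range, Finset.mem_image]
    constructor
    · intro ⟨h1, h2⟩
      exact ⟨n/3, by omega, by omega⟩
    · rintro ⟨k, hk, rfl⟩
      omega
  have hcard : ∀ m : ℕ, ((Finset.range m).filter (· % 3 = m % 3)).card = m / 3 := by
    intro m
    rw [himg m, Finset.card_image_of_injective _ (fun i j h => by omega), Finset.card_range]
  have hdisj : Disjoint ((Finset.range a).filter (· % 3 = a % 3))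
      ((Finset.range b).filter (· % 3 = b % 3)) := by
    rw [Finset.disjoint_left]
    intro n hn hn'
    simp only [Finset.mem_filter] at hn hn'
    omega
  constructor
  · rw [hset]; exact Finset.finite_toSet _
  · rw [hset, Set.ncard_coe_finset, Finset.card_union_of_disjoint hdisj, hcard, hcard]
    omega
end

section
/- Let K be a field and let r, s be integers with 1 ≤ r < s and s − r not divisible by 3. Let φ : K[Z₁, Z₂, Z₃] → K[t] be the K-algebra homomorphism determined by Z₁ ↦ t³, Z₂ ↦ t^{2r+s}, Z₃ ↦ t^{r+2s}. Then the kernel of φ is the ideal generated by the three polynomials Z₂² − Z₁^r Z₃, Z₂Z₃ − Z₁^{r+s}, and Z₃² − Z₁^s Z₂. -/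
/-!
Modulo the three binomials, `Z₂` and `Z₃` can be eliminated down to degree one, so every
polynomial is congruent to some `A(Z₁) + B(Z₁) Z₂ + C(Z₁) Z₃`. Its image under `φ` is
`A(t³) + B(t³) t^(2r+s) + C(t³) t^(r+2s)`, and the exponents occurring in the three summands lie
in the residue classes `0`, `s - r` and `r - s` modulo `3`, which are distinct because
`3 ∤ s - r`. Hence such a form lies in `ker φ` only if `A = B = C = 0`.
-/

open MvPolynomial Polynomial

namespace Polynomial

variable {R : Type*} [CommSemiring R] {p : ℕ}

theorem coeff_expand_mul_X_pow_mul_add (hp : 0 < p) (f : R[X]) (e m : ℕ) :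
    (expand R p f * X ^ e).coeff (p * m + e) = f.coeff m := by
  rw [coeff_mul_X_pow, coeff_expand_mul' hp]

theorem coeff_expand_mul_X_pow_of_mod_ne (hp : 0 < p) (f : R[X]) {e n : ℕ}
    (hne : n % p ≠ e % p) : (expand R p f * X ^ e).coeff n = 0 := by
  rw [coeff_mul_X_pow', coeff_expand hp]
  split_ifs with he hdvd
  · exact absurd ((Nat.modEq_iff_dvd' he).mpr hdvd).symm hne
  · rfl
  · rfl

theorem eq_zero_of_sum_expand_mul_X_pow_eq_zero {ι : Type*} {s : Finset ι} (hp : 0 < p)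
    {f : ι → R[X]} {e : ι → ℕ} (he : Set.InjOn (fun i ↦ e i % p) s)
    (h : ∑ i ∈ s, expand R p (f i) * X ^ e i = 0) : ∀ i ∈ s, f i = 0 := by
  intro i hi
  ext m
  have hcoeff := congrArg (coeff · (p * m + e i)) h
  simp only [finsetSum_coeff, coeff_zero] at hcoeff
  rw [Finset.sum_eq_single_of_mem i hi fun j hj hji ↦ coeff_expand_mul_X_pow_of_mod_ne hp _
    fun hmod ↦ hji (he hj hi (by simpa [Nat.mul_add_mod] using hmod.symm)),
    coeff_expand_mul_X_pow_mul_add hp] at hcoeff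
  simpa using hcoeff

end Polynomial

section MonomialCurve

variable (R : Type*) [CommRing R] (r s : ℕ)

noncomputable def monomialCurveIdeal : Ideal (MvPolynomial (Fin 3) R) :=
  Ideal.span {X 1 ^ 2 - X 0 ^ r * X 2, X 1 * X 2 - X 0 ^ (r + s), X 2 ^ 2 - X 0 ^ s * X 1}

noncomputable def monomialCurve : Fin 3 → R[X] :=
  ![Polynomial.X ^ 3, Polynomial.X ^ (2 * r + s), Polynomial.X ^ (r + 2 * s)]

variable {R}

noncomputable def reducedForm (a b c : R[X]) : MvPolynomial (Fin 3) R :=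
  a.toMvPolynomial 0 + b.toMvPolynomial 0 * X 1 + c.toMvPolynomial 0 * X 2

theorem reducedForm_add (a b c a' b' c' : R[X]) :
    reducedForm a b c + reducedForm a' b' c' = reducedForm (a + a') (b + b') (c + c') := by
  simp only [reducedForm, map_add]
  ring

theorem exists_reducedForm_mul_X_sub_mem (a b c : R[X]) (i : Fin 3) :
    ∃ a' b' c', reducedForm a b c * X i - reducedForm a' b' c' ∈ monomialCurveIdeal R r s := by
  have h₁ : X 1 ^ 2 - X 0 ^ r * X 2 ∈ monomialCurveIdeal R r s := Ideal.subset_span (by simp)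
  have h₂ : X 1 * X 2 - X 0 ^ (r + s) ∈ monomialCurveIdeal R r s := Ideal.subset_span (by simp)
  have h₃ : X 2 ^ 2 - X 0 ^ s * X 1 ∈ monomialCurveIdeal R r s := Ideal.subset_span (by simp)
  obtain rfl | rfl | rfl : i = 0 ∨ i = 1 ∨ i = 2 := by fin_cases i <;> simp
  · refine ⟨a * Polynomial.X, b * Polynomial.X, c * Polynomial.X, ?_⟩
    convert zero_mem (monomialCurveIdeal R r s) using 1
    simp only [reducedForm, map_mul, toMvPolynomial_X]
    ring
  · refine ⟨c * Polynomial.X ^ (r + s), a, b * Polynomial.X ^ r, ?_⟩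
    convert add_mem (Ideal.mul_mem_left _ (b.toMvPolynomial 0) h₁)
      (Ideal.mul_mem_left _ (c.toMvPolynomial 0) h₂) using 1
    simp only [reducedForm, map_mul, map_pow, toMvPolynomial_X]
    ring
  · refine ⟨b * Polynomial.X ^ (r + s), c * Polynomial.X ^ s, a, ?_⟩
    convert add_mem (Ideal.mul_mem_left _ (c.toMvPolynomial 0) h₃)
      (Ideal.mul_mem_left _ (b.toMvPolynomial 0) h₂) using 1
    simp only [reducedForm, map_mul, map_pow, toMvPolynomial_X]
    ring

theorem exists_sub_reducedForm_mem (p : MvPolynomial (Fin 3) R) :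
    ∃ a b c, p - reducedForm a b c ∈ monomialCurveIdeal R r s := by
  induction p using MvPolynomial.induction_on with
  | C k => exact ⟨Polynomial.C k, 0, 0, by simp [reducedForm]⟩
  | add p q hp hq =>
    obtain ⟨a, b, c, hp⟩ := hp
    obtain ⟨a', b', c', hq⟩ := hq
    refine ⟨a + a', b + b', c + c', ?_⟩
    rw [← reducedForm_add, add_sub_add_comm]
    exact add_mem hp hq
  | mul_X p i hp =>
    obtain ⟨a, b, c, hp⟩ := hp
    obtain ⟨a', b', c', hmul⟩ := exists_reducedForm_mul_X_sub_mem r s a b c i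
    refine ⟨a', b', c', ?_⟩
    rw [← sub_add_sub_cancel _ (reducedForm a b c * X i), ← sub_mul]
    exact add_mem (Ideal.mul_mem_right _ _ hp) hmul

theorem monomialCurveIdeal_le_ker :
    monomialCurveIdeal R r s ≤
      RingHom.ker (MvPolynomial.aeval (monomialCurve R r s)).toRingHom := by
  rw [monomialCurveIdeal, Ideal.span_le]
  rintro f (rfl | rfl | rfl) <;> simp [monomialCurve, ← pow_mul, ← pow_add] <;> ring_nf

theorem aeval_monomialCurve_reducedForm (a b c : R[X]) :
    MvPolynomial.aeval (monomialCurve R r s) (reducedForm a b c) = expand R 3 a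
      + expand R 3 b * Polynomial.X ^ (2 * r + s) + expand R 3 c * Polynomial.X ^ (r + 2 * s) := by
  have hexpand (q : R[X]) : Polynomial.aeval (Polynomial.X ^ 3) q = expand R 3 q := by
    rw [← expand_aeval, Polynomial.aeval_X_left_apply]
  simp [reducedForm, monomialCurve, hexpand]

theorem reducedForm_eq_zero_of_aeval_eq_zero (h3 : ¬ 3 ∣ s - r) {a b c : R[X]}
    (h : MvPolynomial.aeval (monomialCurve R r s) (reducedForm a b c) = 0) :
    a = 0 ∧ b = 0 ∧ c = 0 := by
  let e : Fin 3 → ℕ := ![0, 2 * r + s, r + 2 * s]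
  have hsum : ∑ i, expand R 3 (![a, b, c] i) * Polynomial.X ^ e i = 0 := by
    simpa [e, Fin.sum_univ_three, aeval_monomialCurve_reducedForm] using h
  have hinj : Set.InjOn (fun i ↦ e i % 3) (Finset.univ : Finset (Fin 3)) := by
    intro i _ j _ hij
    fin_cases i <;> fin_cases j <;> simp [e] at hij ⊢ <;> omega
  have hzero := eq_zero_of_sum_expand_mul_X_pow_eq_zero (by norm_num) hinj hsum
  exact ⟨hzero 0 (by simp), hzero 1 (by simp), hzero 2 (by simp)⟩

end MonomialCurve

theorem stmt3_general (K : Type*) [Field K] (r s : ℕ)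
    (h3 : ¬ (3 ∣ (s - r)))
    (φ : MvPolynomial (Fin 3) K →ₐ[K] Polynomial K)
    (hφ : φ = MvPolynomial.aeval
      ![(Polynomial.X : Polynomial K) ^ 3, Polynomial.X ^ (2*r+s), Polynomial.X ^ (r+2*s)]) :
    RingHom.ker φ.toRingHom =
      Ideal.span ({ (MvPolynomial.X 1)^2 - (MvPolynomial.X 0)^r * MvPolynomial.X 2,
        MvPolynomial.X 1 * MvPolynomial.X 2 - (MvPolynomial.X 0)^(r+s),
        (MvPolynomial.X 2)^2 - (MvPolynomial.X 0)^s * MvPolynomial.X 1 } :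
        Set (MvPolynomial (Fin 3) K)) := by
  subst hφ
  refine le_antisymm (fun p hp ↦ ?_) (monomialCurveIdeal_le_ker (R := K) r s)
  obtain ⟨a, b, c, hmem⟩ := exists_sub_reducedForm_mem r s p
  have hker : MvPolynomial.aeval (monomialCurve K r s) (reducedForm a b c) = 0 := by
    have hp : MvPolynomial.aeval (monomialCurve K r s) p = 0 := hp
    simpa [hp] using monomialCurveIdeal_le_ker (R := K) r s hmem
  obtain ⟨rfl, rfl, rfl⟩ := reducedForm_eq_zero_of_aeval_eq_zero r s h3 hker
  simpa [reducedForm, monomialCurveIdeal] using hmem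

/-- Let `K` be a field, `r, s` integers with `1 ≤ r < s` and `3 ∤ (s − r)`.
Let `φ : K[Z₁,Z₂,Z₃] → K[t]` be the `K`-algebra homomorphism determined by
`Z₁ ↦ t³`, `Z₂ ↦ t^{2r+s}`, `Z₃ ↦ t^{r+2s}`. Then `ker φ` is the ideal generated by
`Z₂² − Z₁^r Z₃`, `Z₂Z₃ − Z₁^{r+s}`, and `Z₃² − Z₁^s Z₂`. -/
theorem stmt3 (K : Type*) [Field K] (r s : ℕ) (hr : 1 ≤ r) (hrs : r < s)
    (h3 : ¬ (3 ∣ (s - r)))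
    (φ : MvPolynomial (Fin 3) K →ₐ[K] Polynomial K)
    (hφ : φ = MvPolynomial.aeval
      ![(Polynomial.X : Polynomial K) ^ 3, Polynomial.X ^ (2*r+s), Polynomial.X ^ (r+2*s)]) :
    RingHom.ker φ.toRingHom =
      Ideal.span ({ (MvPolynomial.X 1)^2 - (MvPolynomial.X 0)^r * MvPolynomial.X 2,
        MvPolynomial.X 1 * MvPolynomial.X 2 - (MvPolynomial.X 0)^(r+s),
        (MvPolynomial.X 2)^2 - (MvPolynomial.X 0)^s * MvPolynomial.X 1 } :
        Set (MvPolynomial (Fin 3) K)) :=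
  stmt3_general K r s h3 φ hφ
end

section
/- Let r, s be positive integers and b₁, …, b_{s+r} ∈ ℂ pairwise distinct; set k_s(x) = (x−b₁)⋯(x−b_s) and k_r(x) = (x−b_{s+1})⋯(x−b_{s+r}). Define f₁ = y₁² − y₂k_r(x), f₂ = y₁y₂ − k_r(x)k_s(x), f₃ = y₂² − y₁k_s(x). Then at every point (x, y₁, y₂) ∈ ℂ³ with f₁ = f₂ = f₃ = 0, the 3×3 matrix of partial derivatives (∂f_i/∂x, ∂f_i/∂y₁, ∂f_i/∂y₂)_{i=1,2,3} has rank exactly 2; in particular the affine curve X^{(3,2r+s,r+2s)} is non-singular. -/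
/-!
The curve is the locus where `[[k_r, y₁, y₂], [y₁, y₂, k_s]]` has rank one, and the two rows of this
matrix, read as syzygies of its `2 × 2` minors, give the left null vectors `(y₂, -y₁, k_r)` and
`(k_s, -y₂, y₁)` of the Jacobian. Since `k_r k_s` is separable, `k_r` and `k_s` are coprime, so one
of these vectors is nonzero and the rank is at most two. For the lower bound a `2 × 2` minor is
nonzero: it is `3 k_r k_s` where neither polynomial vanishes, and where one of them vanishes both
`y`'s vanish and the minor is, up to sign, the derivative of the vanishing factor (nonzero by
separability) times the square of the other.
-/

open Polynomial Matrix

theorem Matrix.rank_lt_card_of_vecMul_eq_zero {K n : Type*} [Field K] [Fintype n] [DecidableEq n]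
    {M : Matrix n n K} {v : n → K} (hv : v ≠ 0) (h : v ᵥ* M = 0) :
    M.rank < Fintype.card n := by
  obtain ⟨w, hw, hMw⟩ :=
    exists_mulVec_eq_zero_iff.mpr (exists_vecMul_eq_zero_iff.mp ⟨v, hv, h⟩)
  have hker : 0 < Module.finrank K (LinearMap.ker M.mulVecLin) :=
    Module.finrank_pos_iff_exists_ne_zero.mpr ⟨⟨w, hMw⟩, fun h0 => hw (congrArg Subtype.val h0)⟩
  have := LinearMap.finrank_range_add_finrank_ker M.mulVecLin
  rw [Module.finrank_fintype_fun_eq_card] at this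
  rw [Matrix.rank]
  omega

theorem Matrix.le_rank_of_det_submatrix_ne_zero {K m n : Type*} [Field K] [Fintype n] {k : ℕ}
    (M : Matrix m n K) (r : Fin k → m) (c : Fin k → n) (h : (M.submatrix r c).det ≠ 0) :
    k ≤ M.rank := by
  simpa using (rank_of_det_ne_zero h).symm.le.trans (M.rank_submatrix_le r c)

theorem Polynomial.Separable.eval_derivative_ne_zero {R : Type*} [CommRing R] [Nontrivial R]
    {p : R[X]} (h : p.Separable) {x : R} (hx : p.eval x = 0) : p.derivative.eval x ≠ 0 :=
  h.eval₂_derivative_ne_zero (RingHom.id R) hx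

theorem IsCoprime.eval_ne_zero_or_eval_ne_zero {R : Type*} [CommRing R] [Nontrivial R]
    {p q : R[X]} (h : IsCoprime p q) (x : R) : p.eval x ≠ 0 ∨ q.eval x ≠ 0 := by
  obtain ⟨u, v, huv⟩ := h
  by_contra! hpq
  simpa [hpq.1, hpq.2] using congrArg (eval x) huv

/-- The Jacobian of `(y₁² - y₂ k_r, y₁ y₂ - k_r k_s, y₂² - y₁ k_s)` at a point `(x, y₁, y₂)`, written
in terms of `a = k_r(x)`, `c = k_s(x)`, `a' = k_r'(x)` and `c' = k_s'(x)`. -/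
def curveJacobian {K : Type*} [CommRing K] (a c a' c' y₁ y₂ : K) : Matrix (Fin 3) (Fin 3) K :=
  !![-(y₂ * a'), 2 * y₁, -a;
     -(a' * c + a * c'), y₂, y₁;
     -(y₁ * c'), -c, 2 * y₂]

section curveJacobian

variable {K : Type*} [Field K] {a c a' c' y₁ y₂ : K}

theorem vecMul_curveJacobian_left_eq_zero (h₁ : y₁ ^ 2 = y₂ * a) (h₂ : y₁ * y₂ = a * c)
    (h₃ : y₂ ^ 2 = y₁ * c) : ![y₂, -y₁, a] ᵥ* curveJacobian a c a' c' y₁ y₂ = 0 := by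
  ext j
  fin_cases j <;> simp [curveJacobian, vecMul, dotProduct, Fin.sum_univ_three]
  · linear_combination -a' * h₃
  · linear_combination h₂
  · linear_combination -h₁

theorem vecMul_curveJacobian_right_eq_zero (h₁ : y₁ ^ 2 = y₂ * a) (h₂ : y₁ * y₂ = a * c)
    (h₃ : y₂ ^ 2 = y₁ * c) : ![c, -y₂, y₁] ᵥ* curveJacobian a c a' c' y₁ y₂ = 0 := by
  ext j
  fin_cases j <;> simp [curveJacobian, vecMul, dotProduct, Fin.sum_univ_three]
  · linear_combination -c' * h₁
  · linear_combination -h₃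
  · linear_combination h₂

theorem rank_curveJacobian_le_two (hac : a ≠ 0 ∨ c ≠ 0) (h₁ : y₁ ^ 2 = y₂ * a)
    (h₂ : y₁ * y₂ = a * c) (h₃ : y₂ ^ 2 = y₁ * c) : (curveJacobian a c a' c' y₁ y₂).rank ≤ 2 := by
  rcases hac with ha | hc
  · simpa [Nat.lt_succ_iff] using rank_lt_card_of_vecMul_eq_zero
      (fun h => ha (by simpa using congrFun h 2)) (vecMul_curveJacobian_left_eq_zero h₁ h₂ h₃)
  · simpa [Nat.lt_succ_iff] using rank_lt_card_of_vecMul_eq_zero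
      (fun h => hc (by simpa using congrFun h 0)) (vecMul_curveJacobian_right_eq_zero h₁ h₂ h₃)

theorem two_le_rank_curveJacobian (h3 : (3 : K) ≠ 0) (hac : a ≠ 0 ∨ c ≠ 0)
    (ha' : a = 0 → a' ≠ 0) (hc' : c = 0 → c' ≠ 0) (h₁ : y₁ ^ 2 = y₂ * a)
    (h₂ : y₁ * y₂ = a * c) (h₃ : y₂ ^ 2 = y₁ * c) : 2 ≤ (curveJacobian a c a' c' y₁ y₂).rank := by
  by_cases ha : a = 0
  · have hc : c ≠ 0 := hac.resolve_left (not_not.mpr ha)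
    have hy₁ : y₁ = 0 := pow_eq_zero_iff two_ne_zero |>.mp (by rw [h₁, ha, mul_zero])
    have hy₂ : y₂ = 0 := pow_eq_zero_iff two_ne_zero |>.mp (by rw [h₃, hy₁, zero_mul])
    apply le_rank_of_det_submatrix_ne_zero _ ![1, 2] ![0, 1]
    rw [det_fin_two]
    simpa [curveJacobian, ha, hy₁, hy₂] using ⟨ha' ha, hc⟩
  by_cases hc : c = 0
  · have hy₂ : y₂ = 0 := pow_eq_zero_iff two_ne_zero |>.mp (by rw [h₃, hc, mul_zero])
    have hy₁ : y₁ = 0 := pow_eq_zero_iff two_ne_zero |>.mp (by rw [h₁, hy₂, zero_mul])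
    apply le_rank_of_det_submatrix_ne_zero _ ![0, 1] ![0, 2]
    rw [det_fin_two]
    simpa [curveJacobian, hc, hy₁, hy₂] using ⟨ha, hc' hc⟩
  · apply le_rank_of_det_submatrix_ne_zero _ ![0, 2] ![1, 2]
    have hdet : 2 * y₁ * (2 * y₂) - a * c = 3 * (a * c) := by linear_combination 4 * h₂
    rw [det_fin_two]
    simpa [curveJacobian, hdet] using ⟨h3, ha, hc⟩

end curveJacobian

theorem stmt6_general (r s : ℕ) (b : ℕ → ℂ)
    (hb : ∀ i j, i < s + r → j < s + r → i ≠ j → b i ≠ b j)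
    (ks kr : Polynomial ℂ)
    (hks : ks = ∏ i ∈ Finset.range s, (Polynomial.X - Polynomial.C (b i)))
    (hkr : kr = ∏ i ∈ Finset.range r, (Polynomial.X - Polynomial.C (b (s + i)))) :
    ∀ x y₁ y₂ : ℂ,
      y₁ ^ 2 = y₂ * kr.eval x →
      y₁ * y₂ = kr.eval x * ks.eval x →
      y₂ ^ 2 = y₁ * ks.eval x →
      (!![-(y₂ * (Polynomial.derivative kr).eval x), 2 * y₁, -(kr.eval x);
          -((Polynomial.derivative (kr * ks)).eval x), y₂, y₁;
          -(y₁ * (Polynomial.derivative ks).eval x), -(ks.eval x), 2 * y₂] :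
        Matrix (Fin 3) (Fin 3) ℂ).rank = 2 := by
  intro x y₁ y₂ h₁ h₂ h₃
  have hsep : (ks * kr).Separable := by
    rw [hks, hkr, ← Finset.prod_range_add, separable_prod_X_sub_C_iff']
    exact fun i hi j hj hij => not_imp_not.mp (hb i j (by simpa using hi) (by simpa using hj)) hij
  have hcop : IsCoprime kr ks := hsep.isCoprime.symm
  have hJ : !![-(y₂ * (derivative kr).eval x), 2 * y₁, -(kr.eval x);
      -((derivative (kr * ks)).eval x), y₂, y₁;
      -(y₁ * (derivative ks).eval x), -(ks.eval x), 2 * y₂] =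
      curveJacobian (kr.eval x) (ks.eval x) ((derivative kr).eval x) ((derivative ks).eval x)
        y₁ y₂ := by
    simp [curveJacobian, derivative_mul]
  rw [hJ]
  exact le_antisymm (rank_curveJacobian_le_two (hcop.eval_ne_zero_or_eval_ne_zero x) h₁ h₂ h₃)
    (two_le_rank_curveJacobian three_ne_zero (hcop.eval_ne_zero_or_eval_ne_zero x)
      hsep.of_mul_right.eval_derivative_ne_zero hsep.of_mul_left.eval_derivative_ne_zero h₁ h₂ h₃)

/-- Let `r, s` be positive integers and `b₁, …, b_{s+r} ∈ ℂ` pairwise distinct;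
`k_s(x) = (x−b₁)⋯(x−b_s)`, `k_r(x) = (x−b_{s+1})⋯(x−b_{s+r})`. With
`f₁ = y₁² − y₂k_r(x)`, `f₂ = y₁y₂ − k_r(x)k_s(x)`, `f₃ = y₂² − y₁k_s(x)`, at every point
of the affine curve `f₁ = f₂ = f₃ = 0` the 3×3 Jacobian matrix of `(f₁, f₂, f₃)` with
respect to `(x, y₁, y₂)` has rank exactly 2; in particular the curve is non-singular. -/
theorem stmt6 (r s : ℕ) (hr : 0 < r) (hs : 0 < s) (b : ℕ → ℂ)
    (hb : ∀ i j, i < s + r → j < s + r → i ≠ j → b i ≠ b j)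
    (ks kr : Polynomial ℂ)
    (hks : ks = ∏ i ∈ Finset.range s, (Polynomial.X - Polynomial.C (b i)))
    (hkr : kr = ∏ i ∈ Finset.range r, (Polynomial.X - Polynomial.C (b (s + i)))) :
    ∀ x y₁ y₂ : ℂ,
      y₁ ^ 2 = y₂ * kr.eval x →
      y₁ * y₂ = kr.eval x * ks.eval x →
      y₂ ^ 2 = y₁ * ks.eval x →
      (!![-(y₂ * (Polynomial.derivative kr).eval x), 2 * y₁, -(kr.eval x);
          -((Polynomial.derivative (kr * ks)).eval x), y₂, y₁;
          -(y₁ * (Polynomial.derivative ks).eval x), -(ks.eval x), 2 * y₂] :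
        Matrix (Fin 3) (Fin 3) ℂ).rank = 2 :=
  stmt6_general r s b hb ks kr hks hkr
end

section
/- Let r, s be integers with 1 ≤ r < s and s − r not divisible by 3; put r̂ = 2r+s, ŝ = r+2s, g = r+s−1, and let Ĥ = {3i + r̂ : i ∈ ℕ₀} ∪ {3i + ŝ : i ∈ ℕ₀} ∪ {3i + 3(r+s) : i ∈ ℕ₀}. Set g_{r̂} = ⌊(ŝ−1)/3⌋ and g_{ŝ} = ⌊(r̂−1)/3⌋. Then g = g_{r̂} + g_{ŝ}, and the set of the g smallest elements of Ĥ is exactly {3i + r̂ : 0 ≤ i < g_{r̂}} ∪ {3i + ŝ : 0 ≤ i < g_{ŝ}}. -/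
/-! With `a = r̂`, `b = ŝ` and `a + b = 3c`, an element `3i + a` of `Ĥ` lies below
`3g = a + b - 3` exactly when `i < ⌊(b-1)/3⌋`, and symmetrically for `3i + b`, while the
multiples of `3` in `Ĥ` are all `≥ 3c`. So the proposed set is `Ĥ ∩ [0, 3g)`, an initial segment
of `Ĥ`. Since `a ≢ b (mod 3)` its two progressions are disjoint, and
`⌊(b-1)/3⌋ + ⌊(a-1)/3⌋ = c - 1 = g`. -/

lemma setOf_exists_lt_eq_image {α : Type*} (f : ℕ → α) (n : ℕ) :
    {x | ∃ i < n, x = f i} = f '' Set.Iio n := by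
  ext x
  simp only [Set.mem_ofPred_eq, Set.mem_image, Set.mem_Iio, eq_comm]

lemma finite_setOf_exists_lt {α : Type*} (f : ℕ → α) (n : ℕ) :
    {x | ∃ i < n, x = f i}.Finite :=
  setOf_exists_lt_eq_image f n ▸ (Set.finite_Iio n).image f

lemma ncard_setOf_exists_lt_eq_three_mul_add (a n : ℕ) :
    {x | ∃ i < n, x = 3 * i + a}.ncard = n := by
  rw [setOf_exists_lt_eq_image, Set.ncard_image_of_injective _ (fun i j h ↦ by omega),
    Set.ncard_Iio_nat]

section

variable {a b c : ℕ}

lemma three_mul_add_add_three_lt_iff (i : ℕ) : 3 * i + a + 3 < a + b ↔ i < (b - 1) / 3 := by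
  omega

lemma div_three_add_div_three_eq (hc : a + b = 3 * c) (ha : ¬ 3 ∣ a) :
    (b - 1) / 3 + (a - 1) / 3 = c - 1 := by
  omega

lemma disjoint_setOf_three_mul_add (hc : a + b = 3 * c) (ha : ¬ 3 ∣ a) (m n : ℕ) :
    Disjoint {x | ∃ i < m, x = 3 * i + a} {x | ∃ i < n, x = 3 * i + b} := by
  rw [Set.disjoint_left]
  rintro x ⟨i, -, rfl⟩ ⟨j, -, hj⟩
  omega

lemma union_setOf_three_mul_add_eq_inter (hc : a + b = 3 * c) :
    {x | ∃ i < (b - 1) / 3, x = 3 * i + a} ∪ {x | ∃ i < (a - 1) / 3, x = 3 * i + b} =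
      {x | x + 3 < a + b} ∩
        ({x | ∃ i, x = 3 * i + a} ∪ {x | ∃ i, x = 3 * i + b} ∪ {x | ∃ i, x = 3 * i + 3 * c}) := by
  ext x
  simp only [Set.mem_union, Set.mem_inter_iff, Set.mem_ofPred_eq]
  constructor
  · rintro (⟨i, hi, rfl⟩ | ⟨i, hi, rfl⟩)
    · exact ⟨(three_mul_add_add_three_lt_iff i).2 hi, .inl (.inl ⟨i, rfl⟩)⟩
    · exact ⟨by rw [add_comm a b]; exact (three_mul_add_add_three_lt_iff i).2 hi,
        .inl (.inr ⟨i, rfl⟩)⟩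
  · rintro ⟨hx, (⟨i, rfl⟩ | ⟨i, rfl⟩) | ⟨i, rfl⟩⟩
    · exact .inl ⟨i, (three_mul_add_add_three_lt_iff i).1 hx, rfl⟩
    · exact .inr ⟨i, (three_mul_add_add_three_lt_iff i).1 (by rwa [add_comm b a]), rfl⟩
    · omega

end

theorem stmt7_general (r s : ℕ) (h3 : ¬ (3 ∣ (s - r)))
    (rh sh g grh gsh : ℕ) (Hhat S : Set ℕ)
    (hrh : rh = 2*r + s) (hsh : sh = r + 2*s) (hg : g = r + s - 1)
    (hgrh : grh = (sh - 1) / 3) (hgsh : gsh = (rh - 1) / 3)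
    (hH : Hhat = {n | ∃ i, n = 3*i + rh} ∪ {n | ∃ i, n = 3*i + sh}
                  ∪ {n | ∃ i, n = 3*i + 3*(r+s)})
    (hS : S = {n | ∃ i < grh, n = 3*i + rh} ∪ {n | ∃ i < gsh, n = 3*i + sh}) :
    g = grh + gsh ∧
    S ⊆ Hhat ∧ S.ncard = g ∧ ∀ x ∈ Hhat \ S, ∀ y ∈ S, y < x := by
  subst hrh hsh hg hgrh hgsh hH hS
  have hc : (2*r + s) + (r + 2*s) = 3 * (r + s) := by ring
  have ha : ¬ 3 ∣ 2*r + s := by omega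
  have hsum := div_three_add_div_three_eq hc ha
  have hsegment := union_setOf_three_mul_add_eq_inter hc
  refine ⟨hsum.symm, hsegment ▸ Set.inter_subset_right, ?_, ?_⟩
  · rw [Set.ncard_union_eq (disjoint_setOf_three_mul_add hc ha _ _)
      (finite_setOf_exists_lt _ _) (finite_setOf_exists_lt _ _),
      ncard_setOf_exists_lt_eq_three_mul_add, ncard_setOf_exists_lt_eq_three_mul_add, hsum]
  · rw [hsegment]
    rintro x ⟨hxH, hxS⟩ y ⟨hy, -⟩
    have hx : ¬ x + 3 < (2*r + s) + (r + 2*s) := fun hx ↦ hxS ⟨hx, hxH⟩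
    simp only [Set.mem_ofPred_eq] at hx hy
    omega

/-- With `r̂ = 2r+s`, `ŝ = r+2s`, `g = r+s−1`,
`Ĥ = {3i+r̂} ∪ {3i+ŝ} ∪ {3i+3(r+s)}`, `g_{r̂} = ⌊(ŝ−1)/3⌋`, `g_{ŝ} = ⌊(r̂−1)/3⌋`:
then `g = g_{r̂} + g_{ŝ}` and the set of the `g` smallest elements of `Ĥ` is exactly
`{3i+r̂ : 0 ≤ i < g_{r̂}} ∪ {3i+ŝ : 0 ≤ i < g_{ŝ}}`. -/
theorem stmt7 (r s : ℕ) (hr : 1 ≤ r) (hrs : r < s) (h3 : ¬ (3 ∣ (s - r)))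
    (rh sh g grh gsh : ℕ) (Hhat S : Set ℕ)
    (hrh : rh = 2*r + s) (hsh : sh = r + 2*s) (hg : g = r + s - 1)
    (hgrh : grh = (sh - 1) / 3) (hgsh : gsh = (rh - 1) / 3)
    (hH : Hhat = {n | ∃ i, n = 3*i + rh} ∪ {n | ∃ i, n = 3*i + sh}
                  ∪ {n | ∃ i, n = 3*i + 3*(r+s)})
    (hS : S = {n | ∃ i < grh, n = 3*i + rh} ∪ {n | ∃ i < gsh, n = 3*i + sh}) :
    g = grh + gsh ∧
    S ⊆ Hhat ∧ S.ncard = g ∧ ∀ x ∈ Hhat \ S, ∀ y ∈ S, y < x :=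
  stmt7_general r s h3 rh sh g grh gsh Hhat S hrh hsh hg hgrh hgsh hH hS
end

section
/- Let r, s be integers with 1 ≤ r < s and s − r not divisible by 3; put r̂ = 2r+s, ŝ = r+2s, and let Ĥ = {3i + r̂ : i ∈ ℕ₀} ∪ {3i + ŝ : i ∈ ℕ₀} ∪ {3i + 3(r+s) : i ∈ ℕ₀}. Then the number of elements of Ĥ that are strictly less than 3(r+s) equals r + s + 1, and 3(r+s) is the smallest element of Ĥ divisible by 3. -/
/-!
Since `r̂ + ŝ = 3(r+s)` and `r̂ ≡ -ŝ ≢ 0 (mod 3)`, the progressions starting at `r̂` and `ŝ` lie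
in the two distinct nonzero residue classes mod 3. Below `r̂ + ŝ` they contribute `⌈ŝ/3⌉` and
`⌈r̂/3⌉` terms, which add up to `(r̂ + ŝ)/3 + 1`; the third progression contributes nothing below
`3(r+s)` and is the only one that meets the multiples of 3.
-/

lemma ncard_progression_lt (d a m : ℕ) (hd : 0 < d) :
    {n | (∃ i, n = d * i + a) ∧ n < a + m}.ncard = (m + d - 1) / d := by
  have hset : {n | (∃ i, n = d * i + a) ∧ n < a + m} =
      (Finset.image (fun i => d * i + a) (Finset.range ((m + d - 1) / d)) : Set ℕ) := by
    ext n
    simp only [Set.mem_ofPred_eq, Finset.coe_image, Finset.coe_range, Set.mem_image,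
      Set.mem_Iio, Nat.lt_iff_add_one_le, Nat.le_div_iff_mul_le hd]
    constructor
    · rintro ⟨⟨i, rfl⟩, hlt⟩
      exact ⟨i, by rw [add_mul, mul_comm]; omega, rfl⟩
    · rintro ⟨i, hi, rfl⟩
      refine ⟨⟨i, rfl⟩, ?_⟩
      rw [add_mul, mul_comm] at hi
      omega
  rw [hset, Set.ncard_coe_finset, Finset.card_image_of_injective, Finset.card_range]
  intro i j hij
  simpa [hd.ne'] using hij

lemma ncard_union_progressions_lt (d a b : ℕ) (hd : 0 < d) (hab : a % d ≠ b % d) :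
    ({n | (∃ i, n = d * i + a) ∧ n < a + b} ∪ {n | (∃ i, n = d * i + b) ∧ n < b + a}).ncard =
      (b + d - 1) / d + (a + d - 1) / d := by
  have hdisj : Disjoint {n | (∃ i, n = d * i + a) ∧ n < a + b}
      {n | (∃ i, n = d * i + b) ∧ n < b + a} := by
    rw [Set.disjoint_left]
    rintro n ⟨⟨i, rfl⟩, -⟩ ⟨⟨j, hj⟩, -⟩
    apply hab
    simpa [Nat.mul_add_mod] using congrArg (· % d) hj
  rw [Set.ncard_union_eq hdisj ((Set.finite_lt_nat _).subset fun _ h => h.2)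
    ((Set.finite_lt_nat _).subset fun _ h => h.2), ncard_progression_lt d a b hd,
    ncard_progression_lt d b a hd]

theorem stmt8_general (r s : ℕ) (h3 : ¬ (3 ∣ (s - r)))
    (rh sh : ℕ) (Hhat : Set ℕ)
    (hrh : rh = 2*r + s) (hsh : sh = r + 2*s)
    (hH : Hhat = {n | ∃ i, n = 3*i + rh} ∪ {n | ∃ i, n = 3*i + sh}
                  ∪ {n | ∃ i, n = 3*i + 3*(r+s)}) :
    {n | n ∈ Hhat ∧ n < 3*(r+s)}.ncard = r + s + 1 ∧
    IsLeast {n | n ∈ Hhat ∧ 3 ∣ n} (3*(r+s)) := by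
  subst hH
  have hrh_mod : rh % 3 ≠ 0 := by omega
  have hmod_sum : rh % 3 + sh % 3 = 3 := by omega
  refine ⟨?_, ⟨⟨Or.inr ⟨0, by ring⟩, ⟨r + s, rfl⟩⟩, ?_⟩⟩
  · have hsplit : {n | n ∈ {n | ∃ i, n = 3*i + rh} ∪ {n | ∃ i, n = 3*i + sh}
          ∪ {n | ∃ i, n = 3*i + 3*(r+s)} ∧ n < 3*(r+s)} =
        {n | (∃ i, n = 3 * i + rh) ∧ n < rh + sh} ∪ {n | (∃ i, n = 3 * i + sh) ∧ n < sh + rh} := by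
      ext n
      simp only [Set.mem_ofPred_eq, Set.mem_union]
      constructor
      · rintro ⟨(hn | hn) | ⟨i, rfl⟩, hlt⟩
        · exact Or.inl ⟨hn, by omega⟩
        · exact Or.inr ⟨hn, by omega⟩
        · omega
      · rintro (⟨hn, hlt⟩ | ⟨hn, hlt⟩)
        · exact ⟨Or.inl (Or.inl hn), by omega⟩
        · exact ⟨Or.inl (Or.inr hn), by omega⟩
    rw [hsplit, ncard_union_progressions_lt 3 rh sh three_pos (by omega)]
    omega
  · rintro n ⟨((⟨i, rfl⟩ | ⟨i, rfl⟩) | ⟨i, rfl⟩), hdvd⟩ <;> omega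

/-- With `r̂ = 2r+s`, `ŝ = r+2s`,
`Ĥ = {3i+r̂} ∪ {3i+ŝ} ∪ {3i+3(r+s)}`: the number of elements of `Ĥ` strictly less than
`3(r+s)` equals `r+s+1`, and `3(r+s)` is the smallest element of `Ĥ` divisible by 3. -/
theorem stmt8 (r s : ℕ) (hr : 1 ≤ r) (hrs : r < s) (h3 : ¬ (3 ∣ (s - r)))
    (rh sh : ℕ) (Hhat : Set ℕ)
    (hrh : rh = 2*r + s) (hsh : sh = r + 2*s)
    (hH : Hhat = {n | ∃ i, n = 3*i + rh} ∪ {n | ∃ i, n = 3*i + sh}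
                  ∪ {n | ∃ i, n = 3*i + 3*(r+s)}) :
    {n | n ∈ Hhat ∧ n < 3*(r+s)}.ncard = r + s + 1 ∧
    IsLeast {n | n ∈ Hhat ∧ 3 ∣ n} (3*(r+s)) :=
  stmt8_general r s h3 rh sh Hhat hrh hsh hH
end

section
/- Let r, s be integers with 1 ≤ r < s and s − r not divisible by 3; put r̂ = 2r+s, ŝ = r+2s, g = r+s−1, and let Ĥ = {3i + r̂ : i ∈ ℕ₀} ∪ {3i + ŝ : i ∈ ℕ₀} ∪ {3i + 3(r+s) : i ∈ ℕ₀}. For n ∈ ℕ₀ let N̂(n) denote the n-th smallest element of Ĥ (indexed from 0). Then N̂(g−1) = 2g − 2 + r + s (equivalently 3(r+s) − 4), and for every integer i ≥ g one has N̂(i) = g + r + s + i. -/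
/-!
`Ĥ` is the union of three arithmetic progressions of step 3 starting at `r̂`, `ŝ` and `3(r+s)`,
whose residues mod 3 are pairwise distinct because `3 ∤ s - r`. Hence the number of elements of
`Ĥ` below `n` is `⌈(n - r̂)/3⌉ + ⌈(n - ŝ)/3⌉ + ⌈(n - 3(r+s))/3⌉`, and `N̂(k) = m` as soon as
`m ∈ Ĥ` has exactly `k` elements of `Ĥ` below it. For `m = 2g - 2 + r + s` and `m = g + r + s + i`
this count is evaluated once the residues of `r̂` and `ŝ` (which are `1` and `2` in some order)
are known.
-/

namespace Nat

def progression (d a : ℕ) (m : ℕ) : Prop := ∃ i, m = d * i + a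

theorem progression_iff {d a m : ℕ} : progression d a m ↔ a ≤ m ∧ m % d = a % d := by
  constructor
  · rintro ⟨i, rfl⟩
    exact ⟨le_add_left a _, by simp⟩
  · rintro ⟨ham, hmod⟩
    obtain ⟨i, hi⟩ := (Nat.modEq_iff_dvd' ham).mp hmod.symm
    exact ⟨i, by omega⟩

instance (d a : ℕ) : DecidablePred (progression d a) := fun _ =>
  decidable_of_iff _ progression_iff.symm

theorem not_progression_of_progression {d a b m : ℕ} (hab : a % d ≠ b % d)
    (ha : progression d a m) : ¬ progression d b m := fun hb =>
  hab ((progression_iff.mp ha).2.symm.trans (progression_iff.mp hb).2)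

theorem div_add_ite_pos_mod_eq_ceilDiv {d : ℕ} (hd : 0 < d) (b : ℕ) :
    b / d + (if 0 < b % d then 1 else 0) = b ⌈/⌉ d := by
  rw [ceilDiv_eq_add_pred_div, Nat.add_sub_assoc (show 1 ≤ d from hd), Nat.add_div hd,
    Nat.div_eq_of_lt (sub_lt hd one_pos), Nat.mod_eq_of_lt (sub_lt hd one_pos), add_zero]
  exact congrArg _ (if_congr (by omega) rfl rfl)

theorem count_progression {d : ℕ} (hd : 0 < d) (a n : ℕ) :
    count (progression d a) n = (n - a) ⌈/⌉ d := by
  have hbelow : ∀ n ≤ a, count (progression d a) n = 0 := fun n hn =>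
    count_of_forall_not fun m hm ⟨i, hi⟩ => by omega
  rcases le_total n a with hna | han
  · rw [hbelow n hna, Nat.sub_eq_zero_of_le hna, zero_ceilDiv]
  obtain ⟨k, rfl⟩ := Nat.exists_eq_add_of_le han
  have hshift : ∀ j, progression d a (a + j) ↔ j ≡ 0 [MOD d] := fun j => by
    rw [Nat.modEq_zero_iff_dvd]
    exact ⟨fun ⟨i, hi⟩ => ⟨i, by omega⟩, fun ⟨i, hi⟩ => ⟨i, by omega⟩⟩
  have hmultiples := Nat.count_modEq_card k hd 0
  rw [Nat.zero_mod, div_add_ite_pos_mod_eq_ceilDiv hd] at hmultiples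
  rw [count_add, hbelow a le_rfl, zero_add, Nat.add_sub_cancel_left, ← hmultiples]
  simp only [hshift]

theorem count_eq_add_of_disjoint {p q r : ℕ → Prop} [DecidablePred p] [DecidablePred q]
    [DecidablePred r] (h : ∀ m, p m ↔ q m ∨ r m) (hqr : ∀ m, q m → ¬ r m) (n : ℕ) :
    count p n = count q n + count r n := by
  induction n with
  | zero => simp
  | succ n ih =>
    rw [count_succ, count_succ, count_succ, ih]
    by_cases hq : q n
    · simp [h, hq, hqr n hq, add_right_comm]
    · by_cases hr : r n <;> simp [h, hq, hr, add_assoc]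

theorem count_eq_sum_of_progressions {d a b c : ℕ} (hd : 0 < d) (hab : a % d ≠ b % d)
    (hac : a % d ≠ c % d) (hbc : b % d ≠ c % d) {p : ℕ → Prop} [DecidablePred p]
    (hp : ∀ m, p m ↔ progression d a m ∨ progression d b m ∨ progression d c m) (n : ℕ) :
    count p n = (n - a) ⌈/⌉ d + (n - b) ⌈/⌉ d + (n - c) ⌈/⌉ d := by
  have ha_disj (m : ℕ) (ha : progression d a m) : ¬ (progression d b m ∨ progression d c m) :=
    not_or_intro (not_progression_of_progression hab ha) (not_progression_of_progression hac ha)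
  rw [count_eq_add_of_disjoint hp ha_disj,
    count_eq_add_of_disjoint (fun _ => Iff.rfl) fun _ => not_progression_of_progression hbc,
    count_progression hd, count_progression hd, count_progression hd, add_assoc]

end Nat

open Nat

theorem residues_mod_three_of_not_dvd_sub {r s : ℕ} (hrs : r < s) (h3 : ¬ 3 ∣ s - r) :
    (2*r+s) % 3 = 1 ∧ (r+2*s) % 3 = 2 ∨ (2*r+s) % 3 = 2 ∧ (r+2*s) % 3 = 1 := by
  have hk : (s - r) % 3 = 1 ∨ (s - r) % 3 = 2 := by omega
  rcases hk with hk | hk <;> omega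

theorem stmt9_general (r s : ℕ) (hrs : r < s) (h3 : ¬ (3 ∣ (s - r)))
    (g : ℕ) (hg : g = r + s - 1) (p : ℕ → Prop)
    (hp : ∀ n, p n ↔ (∃ i, n = 3*i + (2*r+s)) ∨ (∃ i, n = 3*i + (r+2*s))
                      ∨ (∃ i, n = 3*i + 3*(r+s))) :
    Nat.nth p (g - 1) = 2*g - 2 + r + s ∧
    ∀ i, g ≤ i → Nat.nth p i = g + r + s + i := by
  classical
  subst hg
  have hres := residues_mod_three_of_not_dvd_sub hrs h3
  have hcount (n : ℕ) : count p n =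
      (n - (2*r+s) + 2) / 3 + (n - (r+2*s) + 2) / 3 + (n - 3*(r+s) + 2) / 3 :=
    count_eq_sum_of_progressions three_pos (by omega) (by omega) (by omega) hp n
  have hmem (n : ℕ) : p n ↔ (2*r+s ≤ n ∧ n % 3 = (2*r+s) % 3) ∨
      (r+2*s ≤ n ∧ n % 3 = (r+2*s) % 3) ∨ (3*(r+s) ≤ n ∧ n % 3 = 3*(r+s) % 3) := by
    rw [hp, ← progression_iff, ← progression_iff, ← progression_iff]
    rfl
  have nth_eq {m k : ℕ} (hm : p m) (hk : count p m = k) : nth p k = m := hk ▸ nth_count hm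
  refine ⟨nth_eq ((hmem _).2 ?_) ((hcount _).trans ?_),
    fun i hi => nth_eq ((hmem _).2 ?_) ((hcount _).trans ?_)⟩
  all_goals rcases hres with ⟨h1, h2⟩ | ⟨h1, h2⟩ <;> omega

/-- With `r̂ = 2r+s`, `ŝ = r+2s`, `g = r+s−1`,
`Ĥ = {3i+r̂} ∪ {3i+ŝ} ∪ {3i+3(r+s)}`, and `N̂(n)` the `n`-th smallest element of `Ĥ`
(indexed from 0): `N̂(g−1) = 2g−2+r+s` and `N̂(i) = g+r+s+i` for every `i ≥ g`. -/
theorem stmt9 (r s : ℕ) (hr : 1 ≤ r) (hrs : r < s) (h3 : ¬ (3 ∣ (s - r)))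
    (g : ℕ) (hg : g = r + s - 1) (p : ℕ → Prop)
    (hp : ∀ n, p n ↔ (∃ i, n = 3*i + (2*r+s)) ∨ (∃ i, n = 3*i + (r+2*s))
                      ∨ (∃ i, n = 3*i + 3*(r+s))) :
    Nat.nth p (g - 1) = 2*g - 2 + r + s ∧
    ∀ i, g ≤ i → Nat.nth p i = g + r + s + i :=
  stmt9_general r s hrs h3 g hg p hp
end

section
/- For integers r, s with 1 ≤ r < s and s − r not divisible by 3, the integer 2(r+s) − 3 belongs to the additive submonoid ⟨3, 2r+s, r+2s⟩ of ℕ generated by 3, 2r+s and r+2s. Since the genus of this numerical semigroup is g = r+s−1, the number 2g−1 is a non-gap, so the semigroup ⟨3, 2r+s, r+2s⟩ is not symmetric. -/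
/-- For `1 ≤ r < s` with `3 ∤ (s − r)`, `2(r+s) − 3` belongs to
`⟨3, 2r+s, r+2s⟩`. Since the genus of this numerical semigroup is `g = r+s−1`, the number
`2g−1` is a non-gap, so `⟨3, 2r+s, r+2s⟩` is not symmetric (symmetric would mean
`2g−1` is a gap). -/
theorem stmt10 (r s : ℕ) (hr : 1 ≤ r) (hrs : r < s) (h3 : ¬ (3 ∣ (s - r))) :
    2*(r+s) - 3 ∈ AddSubmonoid.closure ({3, 2*r+s, r+2*s} : Set ℕ) ∧
    ∀ g : ℕ, g = {n : ℕ | n ∉ AddSubmonoid.closure ({3, 2*r+s, r+2*s} : Set ℕ)}.ncard →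
      ¬ (2*g - 1 ∉ AddSubmonoid.closure ({3, 2*r+s, r+2*s} : Set ℕ)) := by
  set S := AddSubmonoid.closure ({3, 2*r+s, r+2*s} : Set ℕ) with hSdef
  have h3S : (3:ℕ) ∈ S := AddSubmonoid.subset_closure (by simp)
  have haS : (2*r+s) ∈ S := AddSubmonoid.subset_closure (by simp)
  have hbS : (r+2*s) ∈ S := AddSubmonoid.subset_closure (by simp)
  have hmul : ∀ k : ℕ, 3*k ∈ S := by
    intro k
    induction k with
    | zero => simpa using S.zero_mem
    | succ n ih => have := add_mem ih h3S; simpa [Nat.mul_succ] using this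
  have hmem : ∀ n : ℕ, n ∈ S ↔ (n % 3 = 0 ∨ (n % 3 = (2*r+s) % 3 ∧ 2*r+s ≤ n) ∨
      (n % 3 = (r+2*s) % 3 ∧ r+2*s ≤ n)) := by
    intro n
    constructor
    · intro hn
      induction hn using AddSubmonoid.closure_induction with
      | mem x hx =>
        rcases hx with h | h | h <;> subst h <;> omega
      | zero => omega
      | add x y _ _ hx hy => omega
    · rintro (h | ⟨h1, h2⟩ | ⟨h1, h2⟩)
      · have : n = 3*(n/3) := by omega
        rw [this]; exact hmul _
      · have : n = (2*r+s) + 3*((n-(2*r+s))/3) := by omega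
        rw [this]; exact add_mem haS (hmul _)
      · have : n = (r+2*s) + 3*((n-(r+2*s))/3) := by omega
        rw [this]; exact add_mem hbS (hmul _)
  have hr3 : r % 3 = 0 ∨ r % 3 = 1 ∨ r % 3 = 2 := by omega
  have hs3 : s % 3 = 0 ∨ s % 3 = 1 ∨ s % 3 = 2 := by omega
  have ha0 : (2*r+s) % 3 ≠ 0 := by rcases hr3 with h|h|h <;> rcases hs3 with h'|h'|h' <;> omega
  have hb0 : (r+2*s) % 3 ≠ 0 := by rcases hr3 with h|h|h <;> rcases hs3 with h'|h'|h' <;> omega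
  have hab : (2*r+s) % 3 ≠ (r+2*s) % 3 := by rcases hr3 with h|h|h <;> rcases hs3 with h'|h'|h' <;> omega
  constructor
  · rw [hmem]; rcases hr3 with h|h|h <;> rcases hs3 with h'|h'|h' <;> omega
  · intro g hg
    have hgval : g = r + s - 1 := by
      rw [hg]
      have hset : {n : ℕ | n ∉ S} =
          ↑(((Finset.range ((2*r+s)/3)).image (fun k => (2*r+s)%3 + 3*k)) ∪
            ((Finset.range ((r+2*s)/3)).image (fun k => (r+2*s)%3 + 3*k))) := by
        ext n
        simp only [Set.mem_setOf_eq, hmem, Finset.coe_union, Set.mem_union,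
          Finset.coe_image, Set.mem_image, Finset.mem_coe, Finset.mem_range]
        constructor
        · intro h
          push_neg at h
          obtain ⟨hn0, hna, hnb⟩ := h
          by_cases hc : n % 3 = (2*r+s) % 3
          · exact Or.inl ⟨(n - (2*r+s)%3)/3, by omega, by omega⟩
          · have hc2 : n % 3 = (r+2*s) % 3 := by omega
            exact Or.inr ⟨(n - (r+2*s)%3)/3, by omega, by omega⟩
        · rintro (⟨k, hk, hkn⟩ | ⟨k, hk, hkn⟩) <;> omega
      rw [hset, Set.ncard_coe_finset]
      have hinj : ∀ c : ℕ, Function.Injective (fun k : ℕ => c + 3*k) := by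
        intro c x y h
        simp only at h; omega
      rw [Finset.card_union_of_disjoint, Finset.card_image_of_injective _ (hinj _),
        Finset.card_image_of_injective _ (hinj _), Finset.card_range, Finset.card_range]
      · rcases hr3 with h|h|h <;> rcases hs3 with h'|h'|h' <;> omega
      · rw [Finset.disjoint_left]
        intro n hn1 hn2
        simp only [Finset.mem_image, Finset.mem_range] at hn1 hn2
        obtain ⟨k1, _, hk1⟩ := hn1
        obtain ⟨k2, _, hk2⟩ := hn2
        omega
    rw [hgval, not_not, hmem]; rcases hr3 with h|h|h <;> rcases hs3 with h'|h'|h' <;> omega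
end

section
/- Let r, s ≥ 0 and let k_s(x) = Σ_{j=0}^{s} λ_j x^{s−j} and k_r(x) = Σ_{j=0}^{r} μ_j x^{r−j} be monic polynomials (λ₀ = μ₀ = 1) over a commutative ring, with formal derivatives k_s′, k_r′, and let k_{s+r} = k_s·k_r. Then in the polynomial ring in two variables t, u: k_{s+r}(t) − k_{s+r}(u) − (t − u)·( k_s′(u)·k_r(u) + k_s(t)·k_r′(t) ) = (t − u)² · [ Σ_{j=0}^{s−2} Σ_{i=0}^{s−j−2} Σ_{k=0}^{r} (i+1) λ_j μ_{r−k} t^{s−j−i−2} u^{i+k} − Σ_{j=0}^{r−2} Σ_{i=0}^{r−j−2} Σ_{k=0}^{s} (i+1) μ_j λ_{s−k} u^{r−j−i−2} t^{i+k} ]. -/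
/-! With `T p (t, u) = p(t) − p(u) − (t − u) p′(u)` the second-order Taylor remainder, the product
rule rearranges the left side into `k_r(u) T k_s (t, u) − k_s(t) T k_r (u, t)`. For a monomial,
`T xⁿ (t, u) = (t − u)² Σ_{i < n−1} (i+1) t^{n−2−i} uⁱ` by induction on `n`; summing over the
coefficients and expanding `k_r(u)` and `k_s(t)` produces the two triple sums. -/

open Polynomial Finset

section

variable {S : Type*} [CommRing S]

lemma pow_succ_sub_pow_succ_sub_mul_pow (t u : S) (m : ℕ) :
    t ^ (m + 1) - u ^ (m + 1) - ((m + 1 : ℕ) : S) * (t - u) * u ^ m =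
      (t - u) ^ 2 * ∑ i ∈ range m, ((i + 1 : ℕ) : S) * t ^ (m - 1 - i) * u ^ i := by
  induction m with
  | zero => simp
  | succ m ih =>
    have hsum : ∑ i ∈ range (m + 1), ((i + 1 : ℕ) : S) * t ^ (m + 1 - 1 - i) * u ^ i =
        t * ∑ i ∈ range m, ((i + 1 : ℕ) : S) * t ^ (m - 1 - i) * u ^ i
          + ((m + 1 : ℕ) : S) * u ^ m := by
      rw [sum_range_succ, mul_sum, Nat.add_sub_cancel, Nat.sub_self, pow_zero, mul_one]
      congr 1
      refine sum_congr rfl fun i hi => ?_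
      rw [show m - i = m - 1 - i + 1 by grind]
      ring
    rw [hsum]
    push_cast at ih ⊢
    linear_combination t * ih

lemma pow_sub_pow_sub_mul_pow_pred (t u : S) (n : ℕ) :
    t ^ n - u ^ n - (n : S) * (t - u) * u ^ (n - 1) =
      (t - u) ^ 2 * ∑ i ∈ range (n - 1), ((i + 1 : ℕ) : S) * t ^ (n - 2 - i) * u ^ i := by
  rcases n with _ | m
  · simp
  · simpa [Nat.sub_sub] using pow_succ_sub_pow_succ_sub_mul_pow t u m

end

section

variable {R S : Type*} [CommRing R] [CommRing S] [Algebra R S]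

lemma aeval_mul_sub_aeval_mul_sub_mul (p q : R[X]) (t u : S) :
    aeval t (p * q) - aeval u (p * q)
      - (t - u) * (aeval u (derivative p) * aeval u q + aeval t p * aeval t (derivative q)) =
    aeval u q * (aeval t p - aeval u p - (t - u) * aeval u (derivative p))
      - aeval t p * (aeval u q - aeval t q - (u - t) * aeval t (derivative q)) := by
  simp only [map_mul]
  ring

lemma aeval_sum_sub_aeval_sum_sub_mul_derivative (t u : S) (s : ℕ) (lam : ℕ → R) :
    let p := ∑ j ∈ range (s + 1), C (lam j) * X ^ (s - j)
    aeval t p - aeval u p - (t - u) * aeval u (derivative p) =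
      (t - u) ^ 2 * ∑ j ∈ range (s - 1), algebraMap R S (lam j) *
        ∑ i ∈ range (s - j - 1), ((i + 1 : ℕ) : S) * t ^ (s - j - 2 - i) * u ^ i := by
  simp only [map_sum, derivative_C_mul, derivative_X_pow, map_mul, aeval_C, map_pow, aeval_X,
    map_natCast, ← sum_sub_distrib, mul_sum (a := t - u)]
  rw [mul_sum, ← sum_subset (range_subset_range.2 (by omega : s - 1 ≤ s + 1))]
  · refine sum_congr rfl fun j _ => ?_
    linear_combination algebraMap R S (lam j) * pow_sub_pow_sub_mul_pow_pred t u (s - j)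
  · intro j _ hj
    rw [mem_range, not_lt] at hj
    have h := pow_sub_pow_sub_mul_pow_pred t u (s - j)
    simp only [show s - j - 1 = 0 by omega, range_zero, sum_empty, mul_zero, pow_zero,
      mul_one] at h ⊢
    linear_combination algebraMap R S (lam j) * h

lemma sum_sum_sum_eq_aeval_mul (t u : S) (s r : ℕ) (lam mu : ℕ → R) :
    ∑ j ∈ range (s - 1), ∑ i ∈ range (s - j - 1), ∑ k ∈ range (r + 1),
        ((i + 1 : ℕ) : S) * algebraMap R S (lam j) * algebraMap R S (mu (r - k))
          * t ^ (s - j - i - 2) * u ^ (i + k) =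
      aeval u (∑ k ∈ range (r + 1), C (mu k) * X ^ (r - k)) *
        ∑ j ∈ range (s - 1), algebraMap R S (lam j) *
          ∑ i ∈ range (s - j - 1), ((i + 1 : ℕ) : S) * t ^ (s - j - 2 - i) * u ^ i := by
  simp only [map_sum, map_mul, aeval_C, map_pow, aeval_X, mul_sum, sum_mul]
  refine sum_congr rfl fun j _ => sum_congr rfl fun i _ => ?_
  rw [← sum_range_reflect]
  refine sum_congr rfl fun k hk => ?_
  rw [mem_range] at hk
  rw [show r + 1 - 1 - k = r - k by omega, show r - (r - k) = k by omega,
    show s - j - i - 2 = s - j - 2 - i by omega, pow_add]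
  ring

end

theorem stmt13_general (R : Type*) [CommRing R] (r s : ℕ)
    (lam mu : ℕ → R)
    (ks kr : Polynomial R)
    (hks : ks = ∑ j ∈ Finset.range (s+1), Polynomial.C (lam j) * Polynomial.X ^ (s - j))
    (hkr : kr = ∑ j ∈ Finset.range (r+1), Polynomial.C (mu j) * Polynomial.X ^ (r - j))
    (t u : MvPolynomial (Fin 2) R) :
    Polynomial.aeval t (ks * kr) - Polynomial.aeval u (ks * kr)
      - (t - u) * (Polynomial.aeval u (Polynomial.derivative ks) * Polynomial.aeval u kr
          + Polynomial.aeval t ks * Polynomial.aeval t (Polynomial.derivative kr)) =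
    (t - u) ^ 2 *
      ((∑ j ∈ Finset.range (s-1), ∑ i ∈ Finset.range (s-j-1), ∑ k ∈ Finset.range (r+1),
          ((i + 1 : ℕ) : MvPolynomial (Fin 2) R) * MvPolynomial.C (lam j)
            * MvPolynomial.C (mu (r-k)) * t ^ (s-j-i-2) * u ^ (i+k))
      - (∑ j ∈ Finset.range (r-1), ∑ i ∈ Finset.range (r-j-1), ∑ k ∈ Finset.range (s+1),
          ((i + 1 : ℕ) : MvPolynomial (Fin 2) R) * MvPolynomial.C (mu j)
            * MvPolynomial.C (lam (s-k)) * u ^ (r-j-i-2) * t ^ (i+k))) := by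
  subst hks hkr
  rw [aeval_mul_sub_aeval_mul_sub_mul, aeval_sum_sub_aeval_sum_sub_mul_derivative,
    aeval_sum_sub_aeval_sum_sub_mul_derivative, ← MvPolynomial.algebraMap_eq,
    sum_sum_sum_eq_aeval_mul, sum_sum_sum_eq_aeval_mul]
  ring

/-- Let `r, s ≥ 0`, `k_s(x) = Σ_{j=0}^{s} λ_j x^{s−j}` and
`k_r(x) = Σ_{j=0}^{r} μ_j x^{r−j}` be monic over a commutative ring, with formal
derivatives `k_s′, k_r′`, and `k_{s+r} = k_s·k_r`. Then in the polynomial ring in `t, u`: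
`k_{s+r}(t) − k_{s+r}(u) − (t − u)(k_s′(u)k_r(u) + k_s(t)k_r′(t))
  = (t − u)² [ Σ_{j=0}^{s−2} Σ_{i=0}^{s−j−2} Σ_{k=0}^{r} (i+1) λ_j μ_{r−k} t^{s−j−i−2} u^{i+k}
             − Σ_{j=0}^{r−2} Σ_{i=0}^{r−j−2} Σ_{k=0}^{s} (i+1) μ_j λ_{s−k} u^{r−j−i−2} t^{i+k} ]`. -/
theorem stmt13 (R : Type*) [CommRing R] (r s : ℕ)
    (lam mu : ℕ → R) (hl0 : lam 0 = 1) (hm0 : mu 0 = 1)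
    (ks kr : Polynomial R)
    (hks : ks = ∑ j ∈ Finset.range (s+1), Polynomial.C (lam j) * Polynomial.X ^ (s - j))
    (hkr : kr = ∑ j ∈ Finset.range (r+1), Polynomial.C (mu j) * Polynomial.X ^ (r - j))
    (t u : MvPolynomial (Fin 2) R)
    (ht : t = MvPolynomial.X 0) (hu : u = MvPolynomial.X 1) :
    Polynomial.aeval t (ks * kr) - Polynomial.aeval u (ks * kr)
      - (t - u) * (Polynomial.aeval u (Polynomial.derivative ks) * Polynomial.aeval u kr
          + Polynomial.aeval t ks * Polynomial.aeval t (Polynomial.derivative kr)) =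
    (t - u) ^ 2 *
      ((∑ j ∈ Finset.range (s-1), ∑ i ∈ Finset.range (s-j-1), ∑ k ∈ Finset.range (r+1),
          ((i + 1 : ℕ) : MvPolynomial (Fin 2) R) * MvPolynomial.C (lam j)
            * MvPolynomial.C (mu (r-k)) * t ^ (s-j-i-2) * u ^ (i+k))
      - (∑ j ∈ Finset.range (r-1), ∑ i ∈ Finset.range (r-j-1), ∑ k ∈ Finset.range (s+1),
          ((i + 1 : ℕ) : MvPolynomial (Fin 2) R) * MvPolynomial.C (mu j)
            * MvPolynomial.C (lam (s-k)) * u ^ (r-j-i-2) * t ^ (i+k))) :=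
  stmt13_general R r s lam mu ks kr hks hkr t u
end
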